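/- arXiv:2309.02865 — 2 statements merged into one kernel-verified Lean document; each statement's English description precedes it below -/
import Mathlib

section
/- Let n ≤ m, A ∈ Mat_{n×m}(ℚ_p) nonsingular with singular numbers λ_1 ≥ ... ≥ λ_n. Then for any 1 ≤ k ≤ n, the sum λ_n + λ_{n-1} + ... + λ_{n-k+1} equals the infimum over all k × k minors A' of A of val_p(det A'), where a k × k minor is any k × k submatrix obtained by selecting k rows and k columns of A. -/
/-!
The minimal valuation of a `k × k` minor is unchanged when `A` is multiplied on either side by a
matrix in `GL(ℤ_p)`: expanding the rows of `U * X`, every `k × k` minor of `U * X` is a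
`ℤ_p`-linear combination of `k × k` minors of `X`, so the minimal valuation can only increase,
and applying this to `U⁻¹` gives equality. This reduces the claim to `diag(p^λ_i)`, where every
term of the Leibniz expansion of a `k × k` minor is `0` or a product of `k` distinct `p^λ_i`; its
valuation is therefore at least the sum of the `k` smallest `λ_i`, and the principal minor on the
last `k` indices attains it.
-/


open Matrix

noncomputable def pDiag (p : ℕ) [Fact p.Prime] (n m : ℕ) (lam : Fin n → ℤ) :
    Matrix (Fin n) (Fin m) ℚ_[p] :=
  Matrix.of fun i j => if (i : ℕ) = (j : ℕ) then (p : ℚ_[p]) ^ (lam i) else 0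

noncomputable def intMap {p : ℕ} [Fact p.Prime] {n m : ℕ}
    (M : Matrix (Fin n) (Fin m) ℤ_[p]) : Matrix (Fin n) (Fin m) ℚ_[p] :=
  M.map (fun x => (x : ℚ_[p]))

/-- `lam` is the tuple of singular numbers of `A`. -/
def IsSNF (p : ℕ) [Fact p.Prime] {n m : ℕ} (A : Matrix (Fin n) (Fin m) ℚ_[p])
    (lam : Fin n → ℤ) : Prop :=
  Antitone lam ∧ ∃ (U : Matrix (Fin n) (Fin n) ℤ_[p]) (V : Matrix (Fin m) (Fin m) ℤ_[p]),
    IsUnit U ∧ IsUnit V ∧ A = intMap U * pDiag p n m lam * intMap V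

open Classical in
/-- p-adic valuation, with `val_p 0 = ⊤`. -/
noncomputable def pval {p : ℕ} [Fact p.Prime] (x : ℚ_[p]) : WithTop ℤ :=
  if x = 0 then ⊤ else (x.valuation : WithTop ℤ)

/-- Infimum of `val_p (det A')` over all `k × k` minors `A'` of `A`. -/
noncomputable def minorInf {p : ℕ} [Fact p.Prime] {n m : ℕ}
    (A : Matrix (Fin n) (Fin m) ℚ_[p]) (k : ℕ) : WithTop ℤ :=
  ⨅ (r : Fin k ↪ Fin n) (c : Fin k ↪ Fin m), pval ((A.submatrix r c).det)

open Finset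

namespace Finset

theorem sum_le_sum_of_card_eq_of_forall_sdiff_le {α M : Type*} [DecidableEq α] [AddCommMonoid M]
    [LinearOrder M] [IsOrderedAddMonoid M] {s t : Finset α} {f : α → M} (hst : #s = #t)
    (hf : ∀ x ∈ s \ t, ∀ y ∈ t \ s, f x ≤ f y) : ∑ x ∈ s, f x ≤ ∑ x ∈ t, f x := by
  have hsdiff : ∑ x ∈ s \ t, f x ≤ ∑ x ∈ t \ s, f x := by
    rcases (s \ t).eq_empty_or_nonempty with hempty | hne
    · have : t \ s = ∅ := by rw [← card_eq_zero, ← card_sdiff_comm hst, hempty, card_empty]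
      simp [hempty, this]
    obtain ⟨a, ha, hmax⟩ := exists_max_image (s \ t) f hne
    calc ∑ x ∈ s \ t, f x ≤ #(s \ t) • f a := sum_le_card_nsmul _ _ _ hmax
      _ = #(t \ s) • f a := by rw [card_sdiff_comm hst]
      _ ≤ ∑ x ∈ t \ s, f x := card_nsmul_le_sum _ _ _ (hf a ha)
  calc ∑ x ∈ s, f x = ∑ x ∈ s ∩ t, f x + ∑ x ∈ s \ t, f x :=
        (sum_inter_add_sum_sdiff _ _ _).symm
    _ ≤ ∑ x ∈ t ∩ s, f x + ∑ x ∈ t \ s, f x := by rw [inter_comm]; gcongr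
    _ = ∑ x ∈ t, f x := sum_inter_add_sum_sdiff _ _ _

end Finset

namespace Matrix

theorem det_mul_eq_sum_prod_mul_det_submatrix {R κ ι : Type*} [CommRing R] [Fintype κ]
    [DecidableEq κ] [Fintype ι] (M : Matrix κ ι R) (N : Matrix ι κ R) :
    (M * N).det = ∑ t : κ → ι, (∏ i, M i (t i)) * (N.submatrix t id).det := by
  have hrows : M * N = of fun i => ∑ j, M i j • N j := by
    ext i j; simp [mul_apply, Finset.sum_apply]
  rw [hrows]
  exact (detRowAlternating.toMultilinearMap.map_sum fun i j => M i j • N j).trans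
    (sum_congr rfl fun t _ => detRowAlternating.toMultilinearMap.map_smul_univ _ _)

end Matrix

namespace AddValuation

variable {R Γ₀ : Type*} [CommRing R] [LinearOrderedAddCommMonoidWithTop Γ₀]
  (v : AddValuation R Γ₀)

theorem map_prod {ι : Type*} (s : Finset ι) (f : ι → R) :
    v (∏ i ∈ s, f i) = ∑ i ∈ s, v (f i) := by
  classical
  induction s using Finset.induction_on with
  | empty => simp
  | insert a s ha ih => rw [prod_insert ha, sum_insert ha, v.map_mul, ih]

theorem sum_le_map_det_of_le_map_apply {ι : Type*} [Fintype ι] [DecidableEq ι]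
    (B : Matrix ι ι R) (w : ι → Γ₀) (h : ∀ i j, w i ≤ v (B i j)) : ∑ i, w i ≤ v B.det := by
  rw [det_apply]
  refine v.map_le_sum fun σ _ => ?_
  have hterm : ∑ i, w i ≤ v (∏ i, B (σ i) i) := by
    rw [v.map_prod, ← Equiv.sum_comp σ w]
    exact sum_le_sum fun i _ => h _ _
  rcases Int.units_eq_one_or (Equiv.Perm.sign σ) with hσ | hσ <;>
    simpa [hσ, Units.smul_def, v.map_neg] using hterm

theorem le_map_det_mul {κ ι : Type*} [Fintype κ] [DecidableEq κ] [Fintype ι]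
    {M : Matrix κ ι R} {N : Matrix ι κ R} {g : Γ₀} (hM : ∀ i j, 0 ≤ v (M i j))
    (hN : ∀ t : κ ↪ ι, g ≤ v (N.submatrix t id).det) : g ≤ v (M * N).det := by
  rw [det_mul_eq_sum_prod_mul_det_submatrix]
  refine v.map_le_sum fun t _ => ?_
  by_cases ht : Function.Injective t
  · rw [v.map_mul, v.map_prod]
    calc g = 0 + g := (zero_add g).symm
      _ ≤ _ := add_le_add (sum_nonneg fun i _ => hM _ _) (hN ⟨t, ht⟩)
  · obtain ⟨a, b, hab, hne⟩ := Function.not_injective_iff.mp ht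
    rw [det_zero_of_row_eq hne (by ext j; simp [hab]), mul_zero, v.map_zero]
    exact le_top

end AddValuation

namespace Padic

variable {p : ℕ} [Fact p.Prime]

theorem pval_eq_addValuation (x : ℚ_[p]) : pval x = addValuation x := rfl

theorem pval_coe_nonneg (c : ℤ_[p]) : 0 ≤ pval (c : ℚ_[p]) := by
  by_cases hc : c = 0
  · simp [hc, pval]
  · rw [pval, if_neg (PadicInt.coe_ne_zero.mpr hc)]
    exact WithTop.coe_nonneg.mpr PadicInt.valuation_coe_nonneg

theorem pval_p_zpow (z : ℤ) : pval ((p : ℚ_[p]) ^ z) = z := by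
  have hp : (p : ℚ_[p]) ≠ 0 := Nat.cast_ne_zero.mpr (Fact.out : p.Prime).ne_zero
  rw [pval, if_neg (zpow_ne_zero z hp), valuation_zpow, valuation_p, mul_one]

end Padic

open Padic

variable {p : ℕ} [Fact p.Prime]

theorem minorInf_le {n m k : ℕ} (A : Matrix (Fin n) (Fin m) ℚ_[p]) (r : Fin k ↪ Fin n)
    (c : Fin k ↪ Fin m) : minorInf A k ≤ pval (A.submatrix r c).det :=
  (ciInf_le (Set.finite_range _).bddBelow r).trans (ciInf_le (Set.finite_range _).bddBelow c)

theorem le_minorInf {n m k : ℕ} [Nonempty (Fin k ↪ Fin n)] [Nonempty (Fin k ↪ Fin m)]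
    {A : Matrix (Fin n) (Fin m) ℚ_[p]} {g : WithTop ℤ}
    (h : ∀ (r : Fin k ↪ Fin n) (c : Fin k ↪ Fin m), g ≤ pval (A.submatrix r c).det) :
    g ≤ minorInf A k :=
  le_ciInf fun r => le_ciInf fun c => h r c

theorem minorInf_transpose {n m k : ℕ} [Nonempty (Fin k ↪ Fin n)] [Nonempty (Fin k ↪ Fin m)]
    (A : Matrix (Fin n) (Fin m) ℚ_[p]) : minorInf Aᵀ k = minorInf A k := by
  apply le_antisymm
  · refine le_minorInf fun r c => ?_
    rw [← det_transpose, transpose_submatrix]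
    exact minorInf_le _ c r
  · refine le_minorInf fun c r => ?_
    rw [← transpose_submatrix, det_transpose]
    exact minorInf_le _ r c

theorem intMap_mul {a b c : ℕ} (M : Matrix (Fin a) (Fin b) ℤ_[p])
    (N : Matrix (Fin b) (Fin c) ℤ_[p]) :
    intMap (M * N) = intMap M * intMap N :=
  Matrix.map_mul (f := PadicInt.Coe.ringHom)

theorem intMap_one {a : ℕ} : intMap (1 : Matrix (Fin a) (Fin a) ℤ_[p]) = 1 :=
  Matrix.map_one _ (by simp) (by simp)

theorem intMap_transpose {a b : ℕ} (M : Matrix (Fin a) (Fin b) ℤ_[p]) :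
    (intMap M)ᵀ = intMap Mᵀ :=
  transpose_map.symm

theorem minorInf_le_minorInf_intMap_mul {n m k : ℕ} [Nonempty (Fin k ↪ Fin n)]
    [Nonempty (Fin k ↪ Fin m)] (U : Matrix (Fin n) (Fin n) ℤ_[p])
    (X : Matrix (Fin n) (Fin m) ℚ_[p]) : minorInf X k ≤ minorInf (intMap U * X) k := by
  refine le_minorInf fun r c => ?_
  rw [submatrix_mul _ _ _ id _ Function.bijective_id, pval_eq_addValuation]
  exact addValuation.le_map_det_mul (fun i j => pval_coe_nonneg _)
    fun t => minorInf_le X t c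

theorem minorInf_intMap_mul {n m k : ℕ} [Nonempty (Fin k ↪ Fin n)] [Nonempty (Fin k ↪ Fin m)]
    {U : Matrix (Fin n) (Fin n) ℤ_[p]} (hU : IsUnit U) (X : Matrix (Fin n) (Fin m) ℚ_[p]) :
    minorInf (intMap U * X) k = minorInf X k := by
  obtain ⟨U', hU'⟩ := hU.exists_left_inv
  refine le_antisymm ?_ (minorInf_le_minorInf_intMap_mul U X)
  calc minorInf (intMap U * X) k ≤ minorInf (intMap U' * (intMap U * X)) k :=
        minorInf_le_minorInf_intMap_mul U' _
    _ = minorInf X k := by rw [← Matrix.mul_assoc, ← intMap_mul, hU', intMap_one, Matrix.one_mul]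

theorem minorInf_mul_intMap {n m k : ℕ} [Nonempty (Fin k ↪ Fin n)] [Nonempty (Fin k ↪ Fin m)]
    {V : Matrix (Fin m) (Fin m) ℤ_[p]} (hV : IsUnit V) (X : Matrix (Fin n) (Fin m) ℚ_[p]) :
    minorInf (X * intMap V) k = minorInf X k := by
  calc minorInf (X * intMap V) k = minorInf (intMap Vᵀ * Xᵀ) k := by
        rw [← minorInf_transpose, transpose_mul, intMap_transpose]
    _ = minorInf X k := by
        rw [minorInf_intMap_mul ((isUnit_transpose V).mpr hV), minorInf_transpose]

def lastIndices (n k : ℕ) : Finset (Fin n) :=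
  univ.filter fun i : Fin n => n - k ≤ (i : ℕ)

theorem card_lastIndices {n k : ℕ} (hkn : k ≤ n) : #(lastIndices n k) = k := by
  have hcompl := card_filter_add_card_filter_not (s := (univ : Finset (Fin n)))
    fun i : Fin n => (i : ℕ) < n - k
  simp only [not_lt, Fin.card_filter_val_lt, card_univ, Fintype.card_fin] at hcompl
  rw [lastIndices]
  omega

theorem sum_lastIndices_le_sum {n k : ℕ} (hkn : k ≤ n) {lam : Fin n → ℤ}
    (hlam : Antitone lam) {T : Finset (Fin n)} (hT : #T = k) :
    ∑ i ∈ lastIndices n k, lam i ≤ ∑ i ∈ T, lam i := by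
  refine sum_le_sum_of_card_eq_of_forall_sdiff_le (by rw [card_lastIndices hkn, hT])
    fun x hx y hy => hlam ?_
  simp only [lastIndices, mem_sdiff, mem_filter, mem_univ, true_and] at hx hy
  exact Fin.le_def.mpr (by omega)

theorem sum_le_pval_det_pDiag_submatrix {n m k : ℕ} (lam : Fin n → ℤ) (r : Fin k ↪ Fin n)
    (c : Fin k ↪ Fin m) :
    ((∑ i, lam (r i) : ℤ) : WithTop ℤ) ≤ pval ((pDiag p n m lam).submatrix r c).det := by
  rw [WithTop.coe_sum, pval_eq_addValuation]
  refine addValuation.sum_le_map_det_of_le_map_apply _ _ fun i j => ?_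
  rw [← pval_eq_addValuation]
  simp only [submatrix_apply, pDiag, of_apply]
  split_ifs
  · rw [pval_p_zpow]
  · simp [pval]

theorem minorInf_pDiag {n m k : ℕ} (hkn : k ≤ n) (hnm : n ≤ m) {lam : Fin n → ℤ}
    (hlam : Antitone lam) :
    minorInf (pDiag p n m lam) k = ((∑ i ∈ lastIndices n k, lam i : ℤ) : WithTop ℤ) := by
  have : Nonempty (Fin k ↪ Fin n) := ⟨Fin.castLEEmb hkn⟩
  have : Nonempty (Fin k ↪ Fin m) := ⟨Fin.castLEEmb (hkn.trans hnm)⟩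
  refine le_antisymm ?_ (le_minorInf fun r c => ?_)
  · let r₀ : Fin k ↪ Fin n := ((lastIndices n k).orderEmbOfFin (card_lastIndices hkn)).toEmbedding
    have hdiag : (pDiag p n m lam).submatrix r₀ (r₀.trans (Fin.castLEEmb hnm))
        = diagonal fun i => (p : ℚ_[p]) ^ lam (r₀ i) := by
      ext i j
      simp [pDiag, diagonal_apply, Fin.val_inj]
    have hsum : ∑ i, lam (r₀ i) = ∑ i ∈ lastIndices n k, lam i := by
      rw [← map_orderEmbOfFin_univ _ (card_lastIndices hkn), sum_map]
    calc minorInf (pDiag p n m lam) k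
        ≤ pval ((pDiag p n m lam).submatrix r₀ (r₀.trans (Fin.castLEEmb hnm))).det :=
          minorInf_le _ _ _
      _ = ((∑ i ∈ lastIndices n k, lam i : ℤ) : WithTop ℤ) := by
        rw [hdiag, det_diagonal, pval_eq_addValuation, addValuation.map_prod, ← hsum,
          WithTop.coe_sum]
        exact sum_congr rfl fun i _ => pval_p_zpow _
  · calc ((∑ i ∈ lastIndices n k, lam i : ℤ) : WithTop ℤ) ≤ ((∑ i, lam (r i) : ℤ) : WithTop ℤ) := by
          rw [← sum_map univ r]
          exact WithTop.coe_le_coe.mpr (sum_lastIndices_le_sum hkn hlam (by simp))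
      _ ≤ _ := sum_le_pval_det_pDiag_submatrix lam r c

theorem sn_sum_eq_minorInf_general (p n m k : ℕ) [Fact p.Prime] (hnm : n ≤ m)
    (A : Matrix (Fin n) (Fin m) ℚ_[p])
    (lam : Fin n → ℤ) (hlam : IsSNF p A lam) (hkn : k ≤ n) :
    ((∑ i ∈ Finset.univ.filter (fun i : Fin n => n - k ≤ (i : ℕ)), lam i : ℤ) : WithTop ℤ)
      = minorInf A k := by
  obtain ⟨hanti, U, V, hU, hV, rfl⟩ := hlam
  have : Nonempty (Fin k ↪ Fin n) := ⟨Fin.castLEEmb hkn⟩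
  have : Nonempty (Fin k ↪ Fin m) := ⟨Fin.castLEEmb (hkn.trans hnm)⟩
  rw [minorInf_mul_intMap hV, minorInf_intMap_mul hU]
  exact (minorInf_pDiag hkn hnm hanti).symm

/-- The sum of the `k` smallest singular numbers equals the minimal valuation of a
`k × k` minor determinant. -/
theorem sn_sum_eq_minorInf (p n m k : ℕ) [Fact p.Prime] (hnm : n ≤ m)
    (A : Matrix (Fin n) (Fin m) ℚ_[p]) (hA : A.rank = n)
    (lam : Fin n → ℤ) (hlam : IsSNF p A lam) (hk1 : 1 ≤ k) (hkn : k ≤ n) :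
    ((∑ i ∈ Finset.univ.filter (fun i : Fin n => n - k ≤ (i : ℕ)), lam i : ℤ) : WithTop ℤ)
      = minorInf A k :=
  sn_sum_eq_minorInf_general p n m k hnm A lam hlam hkn
end

section
/- Let A be the random N × N matrix over ℤ_p whose columns v_N, v_{N−1}, ..., v_1 are sampled from right to left, where the conditional law of v_i given v_{i+1},...,v_N is the additive Haar measure on ℤ_p^N conditioned on v_i mod p not lying in the 𝔽_p-span of v_{i+1} mod p, ..., v_N mod p (the zero subspace when i = N). Then A is distributed according to the Haar probability measure on GL_N(ℤ_p). -/
open MeasureTheory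

/-- The law of the first `k` sampled columns (sampled "right to left":
step `j` samples the column `v_{N-j}` of the paper, conditioned so that its
reduction mod `p` avoids the `𝔽_p`-span of the reductions of the previously
sampled columns).  `ν` is the (additive Haar) law of a single unconditioned
column.  The result after `j` steps is stored at position `j-1`. -/
noncomputable def buildCols (p N : ℕ) [Fact p.Prime] [MeasurableSpace ℤ_[p]]
    (ν : Measure (Fin N → ℤ_[p])) : ℕ → Measure (ℕ → Fin N → ℤ_[p])
  | 0 => Measure.dirac (fun _ => 0)
  | (k+1) => (buildCols p N ν k).bind (fun ws =>
      (ProbabilityTheory.cond ν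
        {v | (fun i => (PadicInt.toZMod (v i) : ZMod p)) ∉
          Submodule.span (ZMod p)
            {x | ∃ j, j < k ∧ x = fun i => (PadicInt.toZMod (ws j i) : ZMod p)}}).map
        (fun v => Function.update ws k v))

/-!
Left multiplication by `g ∈ GL_N(ℤ_p)` preserves the additive Haar measure `ν` on `ℤ_p^N`, and
since `g mod p` is invertible it carries the event "`v mod p` avoids the span of
`w₁ mod p, …, w_k mod p`" onto the same event for `g w₁, …, g w_k`. By induction on the number of
sampled columns, the law of the sampled matrix is therefore invariant under left multiplication
by `GL_N(ℤ_p)`. The reductions of the columns are almost surely linearly independent, so the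
matrix is almost surely invertible mod `p`, hence invertible over the local ring `ℤ_p`. Pulled back
to the compact group `GL_N(ℤ_p)`, the law is a left-invariant probability measure, i.e. the Haar
measure.
-/

open MeasureTheory ProbabilityTheory Matrix

namespace MeasureTheory.Measure

variable {α β γ : Type*} [MeasurableSpace α] [MeasurableSpace β] [MeasurableSpace γ]

lemma map_bind (m : Measure α) {f : α → Measure β} (hf : Measurable f) {g : β → γ}
    (hg : Measurable g) : (m.bind f).map g = m.bind fun a => (f a).map g := by
  rw [bind, bind, ← join_map_map hg, map_map (measurable_map g hg) hf]
  rfl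

lemma bind_map (m : Measure α) {f : β → Measure γ} (hf : Measurable f) {g : α → β}
    (hg : Measurable g) : (m.map g).bind f = m.bind (f ∘ g) := by
  rw [bind, bind, map_map hf hg]

lemma ae_bind_of_ae_ae {m : Measure α} {f : α → Measure β} (hf : Measurable f) {P : β → Prop}
    (hP : MeasurableSet {b | P b}) (h : ∀ᵐ a ∂m, ∀ᵐ b ∂f a, P b) : ∀ᵐ b ∂m.bind f, P b := by
  change m.bind f {b | P b}ᶜ = 0
  rw [bind_apply hP.compl hf.aemeasurable]
  exact (lintegral_congr_ae (h.mono fun a ha => ae_iff.1 ha)).trans lintegral_zero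

lemma measurable_map_of_countable {δ : Type*} [MeasurableSpace δ] [Countable δ]
    [MeasurableSingletonClass δ] (ρ : δ → Measure β) [∀ i, SFinite (ρ i)] {d : α → δ}
    (hd : Measurable d) {g : α → β → γ} (hg : Measurable (Function.uncurry g)) :
    Measurable fun a => (ρ (d a)).map (g a) := by
  have hF : Measurable fun q : α × δ => (ρ q.2).map (g q.1) := by
    refine measurable_from_prod_countable_left fun i =>
      measurable_of_measurable_coe _ fun s hs => ?_
    have hgi : ∀ a, Measurable (g a) := fun a => hg.comp measurable_prodMk_left
    simp only [map_apply (hgi _) hs]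
    exact measurable_measure_prodMk_left (hg hs)
  exact hF.comp (measurable_id.prodMk hd)

end MeasureTheory.Measure

lemma ProbabilityTheory.map_cond_preimage {α : Type*} [MeasurableSpace α] {μ : Measure α}
    {L : α → α} (hL : MeasurePreserving L μ μ) {s : Set α} (hs : MeasurableSet s) :
    (μ[|L ⁻¹' s]).map L = μ[|s] := by
  rw [cond, cond, Measure.map_smul, ← Measure.restrict_map hL.measurable hs, hL.map_eq,
    hL.measure_preimage hs.nullMeasurableSet]

section CompactGroup

variable {G : Type*} [Group G] [TopologicalSpace G] [IsTopologicalGroup G] [CompactSpace G]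
  [MeasurableSpace G] [BorelSpace G]

@[to_additive]
lemma isHaarMeasure_of_isProbabilityMeasure (μ : Measure G) [IsProbabilityMeasure μ]
    [μ.IsMulLeftInvariant] : μ.IsHaarMeasure :=
  Measure.isHaarMeasure_of_isCompact_nonempty_interior μ Set.univ isCompact_univ (by simp) (by simp)
    (by simp)

@[to_additive]
lemma eq_of_isMulLeftInvariant_of_isProbabilityMeasure [T2Space G] (μ μ' : Measure G)
    [IsProbabilityMeasure μ] [IsProbabilityMeasure μ'] [μ.IsMulLeftInvariant]
    [μ'.IsMulLeftInvariant] : μ = μ' := by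
  have := isHaarMeasure_of_isProbabilityMeasure μ
  have := isHaarMeasure_of_isProbabilityMeasure μ'
  exact Measure.isHaarMeasure_eq_of_isProbabilityMeasure μ μ'

@[to_additive]
lemma map_monoidHom_eq_self_of_surjective [T2Space G] (μ : Measure G) [IsProbabilityMeasure μ]
    [μ.IsMulLeftInvariant] {f : G →* G} (hf : Continuous f) (hsurj : Function.Surjective f) :
    μ.map f = μ := by
  have := isMulLeftInvariant_map (μ := μ) f.toMulHom hf.measurable hsurj
  have := Measure.isProbabilityMeasure_map (μ := μ) hf.measurable.aemeasurable
  exact eq_of_isMulLeftInvariant_of_isProbabilityMeasure _ _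

end CompactGroup

section CompactMonoidUnits

variable {M : Type*} [Monoid M] [TopologicalSpace M] [ContinuousMul M] [CompactSpace M]
  [T2Space M]

lemma isClosedEmbedding_units_val : Topology.IsClosedEmbedding (Units.val : Mˣ → M) :=
  Units.continuous_val.isClosedEmbedding Units.val_injective

variable [MeasurableSpace M] [BorelSpace M]

lemma measurableSet_isUnit : MeasurableSet {x : M | IsUnit x} :=
  isClosedEmbedding_units_val.isClosed_range.measurableSet

lemma map_units_val_eq_of_ae_isUnit [MeasurableSpace Mˣ] [BorelSpace Mˣ] (μH : Measure Mˣ)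
    [IsProbabilityMeasure μH] [μH.IsMulLeftInvariant] (μ : Measure M) [IsProbabilityMeasure μ]
    (hunit : ∀ᵐ x ∂μ, IsUnit x)
    (hinv : ∀ g : Mˣ, μ.map ((g : M) * ·) = μ) : μH.map Units.val = μ := by
  have hval := (isClosedEmbedding_units_val (M := M)).measurableEmbedding
  set μ' := μ.comap Units.val
  have hmap : μ'.map Units.val = μ := by
    rw [hval.map_comap]
    exact Measure.restrict_eq_self_of_ae_mem hunit
  have : IsProbabilityMeasure μ' :=
    ⟨by rw [← measure_univ (μ := μ), ← hmap, hval.map_apply, Set.preimage_univ]⟩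
  have : μ'.IsMulLeftInvariant := by
    refine ⟨fun g => ?_⟩
    have hg : Measurable (g * ·) := (continuous_const_mul g).measurable
    calc μ'.map (g * ·) = ((μ'.map (g * ·)).map Units.val).comap Units.val :=
          (hval.comap_map _).symm
      _ = (μ.map ((g : M) * ·)).comap Units.val := by
          rw [Measure.map_map hval.measurable hg, ← hmap,
            Measure.map_map (continuous_const_mul _).measurable hval.measurable]
          rfl
      _ = μ' := by rw [hinv]
  rw [← eq_of_isMulLeftInvariant_of_isProbabilityMeasure μ' μH, hmap]

end CompactMonoidUnits

instance Matrix.compactSpace {m n R : Type*} [TopologicalSpace R] [CompactSpace R] :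
    CompactSpace (Matrix m n R) :=
  inferInstanceAs (CompactSpace (m → n → R))

namespace PadicInt

variable {p : ℕ} [Fact p.Prime]

theorem continuous_toZMod : Continuous (toZMod : ℤ_[p] → ZMod p) := by
  refine continuous_discrete_rng.2 fun b => ?_
  obtain ⟨a, rfl⟩ := ZMod.ringHom_surjective toZMod b
  have : toZMod ⁻¹' {toZMod a} = (· - a) ⁻¹' (IsLocalRing.maximalIdeal ℤ_[p] : Set ℤ_[p]) := by
    ext x
    simp [← ker_toZMod, RingHom.mem_ker, sub_eq_zero]
  rw [this]
  exact (Ideal.isOpen_of_isMaximal _).preimage (continuous_sub_right a)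

end PadicInt

lemma Submodule.span_range_ne_top_of_lt_finrank {K V : Type*} [DivisionRing K] [AddCommGroup V]
    [Module K V] [FiniteDimensional K V] {k : ℕ} (f : Fin k → V) (hk : k < Module.finrank K V) :
    Submodule.span K (Set.range f) ≠ ⊤ := by
  intro h
  have := finrank_range_le_card (R := K) f
  rw [Set.finrank, h, finrank_top, Fintype.card_fin] at this
  omega

section ColumnSampling

variable {p N : ℕ} [Fact p.Prime]

noncomputable def reduceModP {ι : Type*} (v : ι → ℤ_[p]) : ι → ZMod p :=
  fun i => PadicInt.toZMod (v i)

lemma continuous_reduceModP {ι : Type*} : Continuous (reduceModP : (ι → ℤ_[p]) → ι → ZMod p) :=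
  continuous_pi fun i => PadicInt.continuous_toZMod.comp (continuous_apply i)

lemma reduceModP_surjective {ι : Type*} :
    Function.Surjective (reduceModP : (ι → ℤ_[p]) → ι → ZMod p) :=
  (ZMod.ringHom_surjective PadicInt.toZMod).comp_left

lemma reduceModP_mulVec {m n : Type*} [Fintype n] (g : Matrix m n ℤ_[p]) (v : n → ℤ_[p]) :
    reduceModP (g *ᵥ v) = g.map PadicInt.toZMod *ᵥ reduceModP v :=
  funext (RingHom.map_mulVec PadicInt.toZMod g v)

noncomputable def reducedPrefix (k : ℕ) (ws : ℕ → Fin N → ℤ_[p]) : Fin k → Fin N → ZMod p :=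
  fun j => reduceModP (ws j)

lemma reducedPrefix_succ_update (k : ℕ) (ws : ℕ → Fin N → ℤ_[p]) (v : Fin N → ℤ_[p]) :
    reducedPrefix (k + 1) (Function.update ws k v) =
      Fin.snoc (reducedPrefix k ws) (reduceModP v) := by
  funext j
  induction j using Fin.lastCases with
  | last => simp [reducedPrefix]
  | cast j => simp [reducedPrefix, Function.update_of_ne (Nat.ne_of_lt j.2)]

noncomputable def avoidingSet (k : ℕ) (ws : ℕ → Fin N → ℤ_[p]) : Set (Fin N → ℤ_[p]) :=
  reduceModP ⁻¹'
    (Submodule.span (ZMod p) (Set.range (reducedPrefix k ws)) : Set (Fin N → ZMod p))ᶜ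

lemma isOpen_avoidingSet (k : ℕ) (ws : ℕ → Fin N → ℤ_[p]) : IsOpen (avoidingSet k ws) :=
  (isOpen_discrete _).preimage continuous_reduceModP

lemma preimage_mulVec_avoidingSet {g : Matrix (Fin N) (Fin N) ℤ_[p]} (hg : IsUnit g) (k : ℕ)
    (ws : ℕ → Fin N → ℤ_[p]) :
    (g *ᵥ ·) ⁻¹' avoidingSet k (fun j => g *ᵥ ws j) = avoidingSet k ws := by
  set gbar := g.map PadicInt.toZMod
  have hinj : Function.Injective gbar.mulVecLin :=
    mulVec_injective_iff_isUnit.2 (hg.map PadicInt.toZMod.mapMatrix)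
  have hprefix : reducedPrefix k (fun j => g *ᵥ ws j) = gbar.mulVecLin ∘ reducedPrefix k ws :=
    funext fun j => reduceModP_mulVec g (ws j)
  ext v
  simp only [avoidingSet, Set.mem_preimage, Set.mem_compl_iff, SetLike.mem_coe, hprefix,
    Set.range_comp, ← Submodule.map_span, reduceModP_mulVec]
  exact not_congr (SetLike.ext_iff.1 (Submodule.comap_map_eq_of_injective hinj _) _)

variable [MeasurableSpace ℤ_[p]] (ν : Measure (Fin N → ℤ_[p]))

lemma buildCols_succ (k : ℕ) : buildCols p N ν (k + 1) =
    (buildCols p N ν k).bind fun ws => (ν[|avoidingSet k ws]).map (Function.update ws k) := by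
  have hrange : ∀ ws : ℕ → Fin N → ℤ_[p],
      {x | ∃ j < k, x = fun i => PadicInt.toZMod (ws j i)} = Set.range (reducedPrefix k ws) := by
    intro ws
    ext x
    exact ⟨fun ⟨j, hj, h⟩ => ⟨⟨j, hj⟩, h.symm⟩, fun ⟨j, h⟩ => ⟨j, j.2, h.symm⟩⟩
  simp only [buildCols, hrange]
  rfl

variable [BorelSpace ℤ_[p]]

lemma measurable_reducedPrefix (k : ℕ) :
    Measurable (reducedPrefix (p := p) (N := N) k) :=
  measurable_pi_lambda _ fun _ => measurable_pi_lambda _ fun i =>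
    PadicInt.continuous_toZMod.measurable.comp
      ((measurable_pi_apply i).comp (measurable_pi_apply _))

lemma measurableSet_linearIndependent_reducedPrefix (k : ℕ) :
    MeasurableSet {ws : ℕ → Fin N → ℤ_[p] | LinearIndependent (ZMod p) (reducedPrefix k ws)} :=
  measurable_reducedPrefix k
    (Set.toFinite {d : Fin k → Fin N → ZMod p | LinearIndependent (ZMod p) d}).measurableSet

-- The conditioning event depends on `ws` only through the finitely valued `reducedPrefix k ws`.
lemma measurable_buildCols_step (k : ℕ) :
    Measurable fun ws : ℕ → Fin N → ℤ_[p] => (ν[|avoidingSet k ws]).map (Function.update ws k) :=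
  Measure.measurable_map_of_countable
    (fun d : Fin k → Fin N → ZMod p =>
      ν[|reduceModP ⁻¹' (Submodule.span (ZMod p) (Set.range d) : Set (Fin N → ZMod p))ᶜ])
    (measurable_reducedPrefix k) measurable_update'

lemma ae_linearIndependent_reducedPrefix (k : ℕ) :
    ∀ᵐ ws ∂buildCols p N ν k, LinearIndependent (ZMod p) (reducedPrefix k ws) := by
  induction k with
  | zero => exact ae_of_all _ fun _ => linearIndependent_empty_type
  | succ k ih =>
    have hmeas := measurableSet_linearIndependent_reducedPrefix (p := p) (N := N) (k + 1)
    rw [buildCols_succ]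
    refine Measure.ae_bind_of_ae_ae (measurable_buildCols_step ν k) hmeas ?_
    filter_upwards [ih] with ws hws
    rw [ae_map_iff (measurable_update ws).aemeasurable hmeas]
    filter_upwards [ae_cond_mem (isOpen_avoidingSet k ws).measurableSet] with v hv
    rw [reducedPrefix_succ_update, linearIndependent_finSnoc]
    exact ⟨hws, hv⟩

variable [IsProbabilityMeasure ν] [ν.IsAddLeftInvariant]

lemma measure_avoidingSet_ne_zero {k : ℕ} (hk : k < N) (ws : ℕ → Fin N → ℤ_[p]) :
    ν (avoidingSet k ws) ≠ 0 := by
  have := isAddHaarMeasure_of_isProbabilityMeasure ν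
  refine (isOpen_avoidingSet k ws).measure_ne_zero ν ?_
  obtain ⟨x, hx⟩ := SetLike.exists_not_mem_of_ne_top _ <|
    Submodule.span_range_ne_top_of_lt_finrank (K := ZMod p) (reducedPrefix k ws)
      (by simpa using hk)
  obtain ⟨v, rfl⟩ := reduceModP_surjective x
  exact ⟨v, hx⟩

lemma isProbabilityMeasure_buildCols {k : ℕ} (hk : k ≤ N) :
    IsProbabilityMeasure (buildCols p N ν k) := by
  induction k with
  | zero => exact Measure.dirac.isProbabilityMeasure
  | succ k ih =>
    have := ih (by omega)
    have hstep : ∀ ws : ℕ → Fin N → ℤ_[p],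
        IsProbabilityMeasure ((ν[|avoidingSet k ws]).map (Function.update ws k)) := fun ws =>
      have := cond_isProbabilityMeasure (measure_avoidingSet_ne_zero ν (k := k) (by omega) ws)
      Measure.isProbabilityMeasure_map (measurable_update ws).aemeasurable
    constructor
    simp [buildCols_succ, Measure.bind_apply MeasurableSet.univ
      (measurable_buildCols_step ν k).aemeasurable]

lemma measurable_mulVec (g : Matrix (Fin N) (Fin N) ℤ_[p]) :
    Measurable (g *ᵥ · : (Fin N → ℤ_[p]) → Fin N → ℤ_[p]) :=
  (continuous_const.matrix_mulVec continuous_id).measurable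

lemma measurable_pi_mulVec (g : Matrix (Fin N) (Fin N) ℤ_[p]) :
    Measurable fun (ws : ℕ → Fin N → ℤ_[p]) j => g *ᵥ ws j :=
  measurable_pi_lambda _ fun j => (measurable_mulVec g).comp (measurable_pi_apply j)

lemma map_mulVec_eq_self {g : Matrix (Fin N) (Fin N) ℤ_[p]} (hg : IsUnit g) :
    ν.map (g *ᵥ ·) = ν := by
  refine map_addMonoidHom_eq_self_of_surjective ν (f := g.mulVecLin.toAddMonoidHom)
    (continuous_const.matrix_mulVec continuous_id) fun v => ⟨hg.unit⁻¹.val *ᵥ v, ?_⟩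
  change g *ᵥ (_ *ᵥ v) = v
  rw [mulVec_mulVec, IsUnit.mul_val_inv, one_mulVec]

lemma map_mulVec_buildCols {g : Matrix (Fin N) (Fin N) ℤ_[p]} (hg : IsUnit g) (k : ℕ) :
    (buildCols p N ν k).map (fun ws j => g *ᵥ ws j) = buildCols p N ν k := by
  have hG := measurable_pi_mulVec g
  induction k with
  | zero =>
    rw [buildCols, Measure.map_dirac' hG]
    simp only [mulVec_zero]
  | succ k ih =>
    rw [buildCols_succ, Measure.map_bind _ (measurable_buildCols_step ν k) hG]
    conv_rhs => rw [← ih, Measure.bind_map _ (measurable_buildCols_step ν k) hG]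
    congr 1
    funext ws
    have hcomm : (fun ws j => g *ᵥ ws j) ∘ Function.update ws k =
        Function.update (fun j => g *ᵥ ws j) k ∘ (g *ᵥ ·) :=
      funext fun v => funext (Function.apply_update (fun _ => (g *ᵥ ·)) ws k v)
    have hpres : MeasurePreserving (g *ᵥ ·) ν ν := ⟨measurable_mulVec g, map_mulVec_eq_self ν hg⟩
    rw [Function.comp_apply, Measure.map_map hG (measurable_update ws), hcomm,
      ← Measure.map_map (measurable_update _) (measurable_mulVec g),
      ← preimage_mulVec_avoidingSet hg k ws,
      map_cond_preimage hpres (isOpen_avoidingSet k _).measurableSet]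

end ColumnSampling

section ColumnMatrix

variable {R : Type*} {N : ℕ}

def colMatrix (ws : ℕ → Fin N → R) : Matrix (Fin N) (Fin N) R :=
  Matrix.of fun i c => ws (N - 1 - c) i

lemma continuous_colMatrix [TopologicalSpace R] :
    Continuous (colMatrix : (ℕ → Fin N → R) → Matrix (Fin N) (Fin N) R) :=
  continuous_matrix fun i _ => (continuous_apply i).comp (continuous_apply _)

lemma mul_colMatrix [NonUnitalNonAssocSemiring R] (g : Matrix (Fin N) (Fin N) R)
    (ws : ℕ → Fin N → R) : g * colMatrix ws = colMatrix fun j => g *ᵥ ws j := by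
  ext i c
  simp [colMatrix, mul_apply, mulVec, dotProduct]

lemma isUnit_colMatrix_of_linearIndependent {p : ℕ} [Fact p.Prime] {ws : ℕ → Fin N → ℤ_[p]}
    (hws : LinearIndependent (ZMod p) (reducedPrefix N ws)) : IsUnit (colMatrix ws) := by
  have hcols : ((colMatrix ws).map PadicInt.toZMod).col = reducedPrefix N ws ∘ Fin.rev := by
    ext c i
    simp only [col_apply, map_apply, colMatrix, of_apply, Function.comp_apply, reducedPrefix,
      reduceModP, Fin.val_rev, Nat.sub_sub, Nat.add_comm 1]
  have hbar : IsUnit ((colMatrix ws).map PadicInt.toZMod) :=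
    linearIndependent_cols_iff_isUnit.1 (hcols ▸ hws.comp _ Fin.rev_injective)
  rw [isUnit_iff_isUnit_det] at hbar ⊢
  exact isUnit_of_map_unit PadicInt.toZMod _ (by rwa [RingHom.map_det])

end ColumnMatrix

/-- Sampling the columns of a matrix from right to left, each additively
Haar-distributed conditioned on its reduction mod `p` avoiding the span of the
reductions of the previously sampled columns, produces a Haar-distributed
element of `GL_N(ℤ_p)`. -/
theorem haar_glzp_column_sampling (p N : ℕ) [Fact p.Prime]
    [MeasurableSpace ℤ_[p]] [BorelSpace ℤ_[p]]
    (ν : Measure (Fin N → ℤ_[p])) [IsProbabilityMeasure ν] [ν.IsAddLeftInvariant]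
    [MeasurableSpace (Matrix (Fin N) (Fin N) ℤ_[p])]
    [BorelSpace (Matrix (Fin N) (Fin N) ℤ_[p])]
    [MeasurableSpace (Units (Matrix (Fin N) (Fin N) ℤ_[p]))]
    [BorelSpace (Units (Matrix (Fin N) (Fin N) ℤ_[p]))]
    (μH : Measure (Units (Matrix (Fin N) (Fin N) ℤ_[p])))
    [IsProbabilityMeasure μH] [μH.IsMulLeftInvariant] :
    (buildCols p N ν N).map
        (fun ws => Matrix.of fun i (c : Fin N) => ws (N - 1 - (c : ℕ)) i)
      = μH.map (fun U : Units (Matrix (Fin N) (Fin N) ℤ_[p]) => (U : Matrix (Fin N) (Fin N) ℤ_[p])) := by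
  change (buildCols p N ν N).map colMatrix = μH.map Units.val
  have hT : Measurable (colMatrix : (ℕ → Fin N → ℤ_[p]) → _) := continuous_colMatrix.measurable
  have := isProbabilityMeasure_buildCols ν le_rfl
  have := Measure.isProbabilityMeasure_map (μ := buildCols p N ν N) hT.aemeasurable
  refine (map_units_val_eq_of_ae_isUnit μH _ ?_ fun g => ?_).symm
  · rw [ae_map_iff hT.aemeasurable measurableSet_isUnit]
    exact (ae_linearIndependent_reducedPrefix ν N).mono
      fun _ => isUnit_colMatrix_of_linearIndependent
  · rw [Measure.map_map (continuous_const_mul _).measurable hT]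
    have hcomm : ((g : Matrix (Fin N) (Fin N) ℤ_[p]) * ·) ∘ colMatrix =
        colMatrix ∘ fun ws j => (g : Matrix _ _ _) *ᵥ ws j :=
      funext (mul_colMatrix (g : Matrix (Fin N) (Fin N) ℤ_[p]))
    rw [hcomm, ← Measure.map_map hT (measurable_pi_mulVec _), map_mulVec_buildCols ν g.isUnit]
end
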